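/- Let T ≥ 1, η > 0, γ₂ ≥ 0, ρ ∈ [0,1), and let B = C⁻¹ ∘ L, where C ∈ ℝ^{T×T} has entries C_ii = (T−1)γ₂/T + η, C_ij = −γ₂/T (i ≠ j), and L has unit diagonal with off-diagonal entries ρ. Then for the all-ones vector 𝟙 ∈ ℝ^T and any q ∈ ℝ, (q𝟙)ᵀ B⁻¹ (q𝟙) = q² T · [(γ₂ + η)/(1 + (1−ρ)γ₂/(ηT))] · [1 − γ₂ρT/(ηT + γ₂(1 − ρ + ρT))]. -/

import Mathlib

open Matrix

lemma sum_two_ite {T : ℕ} (x y p r : ℝ) (i j : Fin T) :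
    ∑ k, (if i = k then x else y) * (if k = j then p else r) =
      if i = j then x * p + ((T : ℝ) - 1) * (y * r)
      else x * r + y * p + ((T : ℝ) - 2) * (y * r) := by
  have hterm : ∀ k : Fin T, (if i = k then x else y) * (if k = j then p else r) =
      y * r + y * (if k = j then p - r else 0) + (if i = k then x - y else 0) * r
        + (if i = k then x - y else 0) * (if k = j then p - r else 0) := by
    intro k
    split_ifs <;> ring
  simp only [hterm]
  rw [Finset.sum_add_distrib, Finset.sum_add_distrib, Finset.sum_add_distrib]
  rw [Finset.sum_const, ← Finset.mul_sum, Finset.sum_ite_eq' Finset.univ j (fun _ => p - r)]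
  rw [show (∑ k, (if i = k then x - y else 0) * r)
      = (∑ k, (if i = k then x - y else 0)) * r from (Finset.sum_mul ..).symm,
    Finset.sum_ite_eq Finset.univ i (fun _ => x - y)]
  have hlast : ∑ k, (if i = k then x - y else 0) * (if k = j then p - r else 0) =
      if i = j then (x - y) * (p - r) else 0 := by
    rw [Finset.sum_eq_single i]
    · simp
    · intro b _ hb; simp [Ne.symm hb]
    · simp
  rw [hlast]
  simp only [Finset.card_univ, Fintype.card_fin, Finset.mem_univ, if_true, nsmul_eq_mul]
  by_cases h : i = j <;> simp [h] <;> ring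

lemma sum_one_ite {T : ℕ} (p r : ℝ) (i : Fin T) :
    ∑ k : Fin T, (if i = k then p else r) = p + ((T : ℝ) - 1) * r := by
  have hterm : ∀ k : Fin T, (if i = k then p else r) =
      r + (if i = k then p - r else 0) := by
    intro k; by_cases h : i = k <;> simp [h]
  simp only [hterm]
  rw [Finset.sum_add_distrib, Finset.sum_const,
    Finset.sum_ite_eq Finset.univ i (fun _ => p - r)]
  simp only [Finset.card_univ, Fintype.card_fin, Finset.mem_univ, if_true, nsmul_eq_mul]
  ring

/-- For `B = C⁻¹ ∘ L` (Hadamard product) from the symmetric multi-task formulation,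
the quadratic form of `B⁻¹` at a constant vector `q𝟙` equals
`q² T · [(γ₂+η)/(1+(1-ρ)γ₂/(ηT))] · [1 - γ₂ρT/(ηT + γ₂(1-ρ+ρT))]`. -/
theorem stmt9 (T : ℕ) (hT : 1 ≤ T) (η γ₂ ρ : ℝ) (hη : 0 < η) (hγ₂ : 0 ≤ γ₂)
    (hρ : ρ ∈ Set.Ico (0 : ℝ) 1)
    (C L B : Matrix (Fin T) (Fin T) ℝ)
    (hC : ∀ i j, C i j = if i = j then ((T : ℝ) - 1) * γ₂ / T + η else -γ₂ / T)
    (hL : ∀ i j, L i j = if i = j then (1 : ℝ) else ρ)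
    (hB : B = Matrix.hadamard C⁻¹ L) (q : ℝ) :
    (fun _ : Fin T => q) ⬝ᵥ B⁻¹.mulVec (fun _ : Fin T => q) =
      q ^ 2 * T * ((γ₂ + η) / (1 + (1 - ρ) * γ₂ / (η * T))) *
        (1 - γ₂ * ρ * T / (η * T + γ₂ * (1 - ρ + ρ * T))) := by
  obtain ⟨hρ0, hρ1⟩ := hρ
  have hT0 : (0 : ℝ) < T := by
    have : (1 : ℝ) ≤ T := by exact_mod_cast hT
    linarith
  have hηγ : (0 : ℝ) < η + γ₂ := by linarith
  set d : ℝ := T * η * (η + γ₂) with hd_def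
  have hd : 0 < d := by positivity
  set A : ℝ := T * η + (1 - ρ) * γ₂ with hA_def
  have hA : 0 < A := by
    have h1 := mul_pos hT0 hη
    have h2 : 0 ≤ (1 - ρ) * γ₂ := mul_nonneg (by linarith) hγ₂
    linarith
  set S : ℝ := T * η + γ₂ * (1 - ρ) + ρ * γ₂ * T with hS_def
  have hS : 0 < S := by
    have h1 := mul_pos hT0 hη
    have h2 : 0 ≤ γ₂ * (1 - ρ) := mul_nonneg hγ₂ (by linarith)
    have h3 : 0 ≤ ρ * γ₂ * ↑T := mul_nonneg (mul_nonneg hρ0 hγ₂) hT0.le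
    linarith
  -- inverse of C
  set M : Matrix (Fin T) (Fin T) ℝ :=
    Matrix.of fun i j => if i = j then 1 / (η + γ₂) + γ₂ / d else γ₂ / d with hM_def
  have hCM : C * M = 1 := by
    ext i j
    rw [Matrix.mul_apply]
    simp only [hM_def, hC, Matrix.of_apply]
    rw [sum_two_ite, Matrix.one_apply]
    by_cases h : i = j <;> simp only [h, if_true, if_false] <;>
      field_simp <;> ring
  have hCinv : C⁻¹ = M := inv_eq_right_inv hCM
  -- explicit form of B
  have hBform : B = Matrix.of fun i j =>
      if i = j then 1 / (η + γ₂) + γ₂ / d else γ₂ / d * ρ := by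
    subst hB
    ext i j
    simp only [Matrix.hadamard_apply, hCinv, hM_def, hL, Matrix.of_apply]
    by_cases h : i = j <;> simp [h]
  -- inverse of B
  set N : Matrix (Fin T) (Fin T) ℝ :=
    Matrix.of fun i j => if i = j then d / A - ρ * γ₂ * d / (A * S)
      else -(ρ * γ₂ * d / (A * S)) with hN_def
  have hBN : B * N = 1 := by
    ext i j
    rw [Matrix.mul_apply]
    simp only [hBform, hN_def, Matrix.of_apply]
    rw [sum_two_ite, Matrix.one_apply]
    by_cases h : i = j <;> simp only [h, if_true, if_false] <;>
      field_simp <;> ring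
  have hBinv : B⁻¹ = N := inv_eq_right_inv hBN
  rw [hBinv]
  simp only [Matrix.mulVec, dotProduct, hN_def, Matrix.of_apply]
  have hrow : ∀ i : Fin T, (∑ k, (if i = k then d / A - ρ * γ₂ * d / (A * S)
      else -(ρ * γ₂ * d / (A * S))) * q) =
      (d / A - ρ * γ₂ * d / (A * S) + ((T : ℝ) - 1) * -(ρ * γ₂ * d / (A * S))) * q := by
    intro i
    rw [← Finset.sum_mul, sum_one_ite]
  simp only [hrow, Finset.sum_const, Finset.card_univ, Fintype.card_fin, nsmul_eq_mul]
  have h1 : η * T + γ₂ * (1 - ρ + ρ * T) = S := by rw [hS_def]; ring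
  have h2 : 1 + (1 - ρ) * γ₂ / (η * T) = A / (η * T) := by
    rw [hA_def]; field_simp
  rw [h1, h2]
  field_simp
  ring
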